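/- For Ψ ∈ (0, π/2): (3/(16 sin Ψ)) ∫_{-Ψ}^{Ψ} ∫_{π/2}^{π} 2 (sin((β - α)/2) - |cos((α + β)/2)|) dβ dα = (3/(16 sin Ψ)) [16√2 sin(Ψ/2) - 8Ψ]. -/

import Mathlib

open Real

/-!
For fixed `α ∈ (-π/2, π/2)` the inner integral is elementary: `cos ((α + β) / 2)` keeps its sign
on `[π/2, π]` when `α ≤ 0`, and changes sign exactly once, at `β = π - α`, when `α ≥ 0`. The
resulting closed forms are combinations of `sin (α/2 + π/4)`, `sin (α/2)`, `cos (α/2)` and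
constants, so splitting the outer integral at `0` leaves elementary integrals; the odd terms
cancel and `cos (π/4 - Ψ/2) - cos (π/4 + Ψ/2) = √2 sin (Ψ/2)` produces the `√2`.
-/

open intervalIntegral in
theorem integral_sin_sub_div_two (α a b : ℝ) :
    ∫ β in a..b, sin ((β - α) / 2) = 2 * (cos ((a - α) / 2) - cos ((b - α) / 2)) := by
  simp [sub_div, integral_comp_div_sub]

open intervalIntegral in
theorem integral_cos_add_div_two (α a b : ℝ) :
    ∫ β in a..b, cos ((α + β) / 2) = 2 * (sin ((α + b) / 2) - sin ((α + a) / 2)) := by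
  simp [add_div, integral_comp_add_div]

open intervalIntegral in
theorem integral_half_angle_combination (a b c p q r s : ℝ) :
    ∫ x in a..b, (p * sin (x / 2 + c) + q * sin (x / 2) + r * cos (x / 2) + s) =
      2 * p * (cos (a / 2 + c) - cos (b / 2 + c)) + 2 * q * (cos (a / 2) - cos (b / 2))
        + 2 * r * (sin (b / 2) - sin (a / 2)) + s * (b - a) := by
  simp (disch := (apply Continuous.intervalIntegrable; fun_prop)) only [integral_add]
  simp only [integral_const_mul, ne_eq, OfNat.ofNat_ne_zero, not_false_eq_true,
    integral_comp_div_add, integral_sin, smul_eq_mul, integral_comp_div, integral_cos,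
    integral_const]
  ring

theorem integral_abs_cos_add_div_two_of_nonpos {α : ℝ} (h₁ : -(3 * π / 2) ≤ α) (h₂ : α ≤ 0) :
    ∫ β in (π/2)..π, |cos ((α + β) / 2)| = 2 * (cos (α / 2) - sin (α / 2 + π / 4)) := by
  have hcos : Set.EqOn (fun β => |cos ((α + β) / 2)|) (fun β => cos ((α + β) / 2))
      (Set.uIcc (π/2) π) := by
    intro β hβ
    rw [Set.uIcc_of_le (by linarith [pi_pos])] at hβ
    exact abs_of_nonneg (cos_nonneg_of_mem_Icc ⟨by linarith [hβ.1], by linarith [hβ.2]⟩)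
  rw [intervalIntegral.integral_congr hcos, integral_cos_add_div_two,
    show (α + π) / 2 = α / 2 + π / 2 by ring, show (α + π / 2) / 2 = α / 2 + π / 4 by ring,
    sin_add_pi_div_two]

theorem integral_abs_cos_add_div_two_of_nonneg {α : ℝ} (h₁ : 0 ≤ α) (h₂ : α ≤ π / 2) :
    ∫ β in (π/2)..π, |cos ((α + β) / 2)| = 2 * (2 - cos (α / 2) - sin (α / 2 + π / 4)) := by
  have hpos : Set.EqOn (fun β => |cos ((α + β) / 2)|) (fun β => cos ((α + β) / 2))
      (Set.uIcc (π/2) (π - α)) := by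
    intro β hβ
    rw [Set.uIcc_of_le (by linarith)] at hβ
    exact abs_of_nonneg (cos_nonneg_of_mem_Icc ⟨by linarith [hβ.1, pi_pos], by linarith [hβ.2]⟩)
  have hneg : Set.EqOn (fun β => |cos ((α + β) / 2)|) (fun β => -cos ((α + β) / 2))
      (Set.uIcc (π - α) π) := by
    intro β hβ
    rw [Set.uIcc_of_le (by linarith)] at hβ
    exact abs_of_nonpos (cos_nonpos_of_pi_div_two_le_of_le (by linarith [hβ.1])
      (by linarith [hβ.2]))
  have hint (a b : ℝ) :
      IntervalIntegrable (fun β => |cos ((α + β) / 2)|) MeasureTheory.volume a b :=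
    Continuous.intervalIntegrable (by fun_prop) a b
  rw [← intervalIntegral.integral_add_adjacent_intervals (hint _ (π - α)) (hint _ _),
    intervalIntegral.integral_congr hpos, intervalIntegral.integral_congr hneg,
    intervalIntegral.integral_neg, integral_cos_add_div_two, integral_cos_add_div_two,
    show (α + (π - α)) / 2 = π / 2 by ring, show (α + π) / 2 = α / 2 + π / 2 by ring,
    show (α + π / 2) / 2 = α / 2 + π / 4 by ring, sin_add_pi_div_two, sin_pi_div_two]
  ring

theorem integral_sin_sub_abs_cos (α : ℝ) :
    ∫ β in (π/2)..π, 2 * (sin ((β - α) / 2) - |cos ((α + β) / 2)|)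
      = 4 * (sin (α / 2 + π / 4) - sin (α / 2)) - 2 * ∫ β in (π/2)..π, |cos ((α + β) / 2)| := by
  rw [intervalIntegral.integral_const_mul, intervalIntegral.integral_sub
      (Continuous.intervalIntegrable (by fun_prop) _ _)
      (Continuous.intervalIntegrable (by fun_prop) _ _),
    integral_sin_sub_div_two, show (π / 2 - α) / 2 = π / 2 - (α / 2 + π / 4) by ring,
    show (π - α) / 2 = π / 2 - α / 2 by ring, cos_pi_div_two_sub, cos_pi_div_two_sub]
  ring

theorem zigzag_term_II (Ψ : ℝ) (hΨ : Ψ ∈ Set.Ioo 0 (π/2)) :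
    (3 / (16 * Real.sin Ψ)) * ∫ α in (-Ψ)..Ψ, ∫ β in (π/2)..π,
        2 * (Real.sin ((β - α)/2) - |Real.cos ((α + β)/2)|)
      = (3 / (16 * Real.sin Ψ)) *
        (16 * Real.sqrt 2 * Real.sin (Ψ/2) - 8 * Ψ) := by
  obtain ⟨hΨ₀, hΨ⟩ := hΨ
  congr 1
  have hcont : Continuous fun α =>
      ∫ β in (π/2)..π, 2 * (sin ((β - α) / 2) - |cos ((α + β) / 2)|) := by
    fun_prop
  have hleft : Set.EqOn (fun α => ∫ β in (π/2)..π, 2 * (sin ((β - α) / 2) - |cos ((α + β) / 2)|))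
      (fun α => 8 * sin (α / 2 + π / 4) + -4 * sin (α / 2) + -4 * cos (α / 2) + 0)
      (Set.uIcc (-Ψ) 0) := by
    intro α hα
    rw [Set.uIcc_of_le (by linarith)] at hα
    dsimp only
    rw [integral_sin_sub_abs_cos, integral_abs_cos_add_div_two_of_nonpos (by linarith [hα.1]) hα.2]
    ring
  have hright : Set.EqOn (fun α => ∫ β in (π/2)..π, 2 * (sin ((β - α) / 2) - |cos ((α + β) / 2)|))
      (fun α => 8 * sin (α / 2 + π / 4) + -4 * sin (α / 2) + 4 * cos (α / 2) + -8)
      (Set.uIcc 0 Ψ) := by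
    intro α hα
    rw [Set.uIcc_of_le hΨ₀.le] at hα
    dsimp only
    rw [integral_sin_sub_abs_cos, integral_abs_cos_add_div_two_of_nonneg hα.1 (by linarith [hα.2])]
    ring
  rw [← intervalIntegral.integral_add_adjacent_intervals (hcont.intervalIntegrable (-Ψ) 0)
      (hcont.intervalIntegrable 0 Ψ), intervalIntegral.integral_congr hleft,
    intervalIntegral.integral_congr hright, integral_half_angle_combination,
    integral_half_angle_combination, neg_div, neg_add_eq_sub]
  simp only [cos_add, cos_sub, cos_neg, sin_neg, cos_pi_div_four, sin_pi_div_four, zero_div,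
    sin_zero, cos_zero]
  ring
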